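/- Let π ∈ S_n, 1 ≤ i ≤ n-1, with {i, i+1} ∩ {π(i), π(i+1)} = ∅ and π⁻¹(i), π⁻¹(i+1) consecutive integers. Let k = min{π⁻¹(i), π⁻¹(i+1)} and w = (1,2,...,n). If π⁻¹(i) > π⁻¹(i+1), then cdes(w⁻ᵏ π wᵏ) = des(w⁻ᵏ π wᵏ) + 1. -/

import Mathlib

/-- Descent number: number of positions `i` (0-indexed, `i+1 < n`) with `π(i) > π(i+1)`. -/
def des {n : ℕ} (π : Equiv.Perm (Fin n)) : ℕ :=
  (Finset.univ.filter (fun i : Fin (n - 1) =>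
    π ⟨i.1 + 1, by have := i.2; omega⟩ < π ⟨i.1, by have := i.2; omega⟩)).card

/-- Cyclic descent number: positions taken cyclically, with `π(n+1) := π(1)`. -/
def cdes {n : ℕ} (π : Equiv.Perm (Fin n)) : ℕ :=
  (Finset.univ.filter (fun i : Fin n =>
    π ⟨(i.1 + 1) % n, Nat.mod_lt _ (by have := i.2; omega)⟩ < π i)).card

open Fin.NatCast Fin.CommRing

lemma finRotate_pow_apply (m k : ℕ) (j : Fin (m+1)) :
    ((finRotate (m+1)) ^ k) j = j + (k : Fin (m+1)) := by
  induction k generalizing j with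
  | zero => simp
  | succ k ih =>
    rw [pow_succ, Equiv.Perm.mul_apply, finRotate_succ_apply, ih]
    push_cast
    ring

lemma conj_apply (m k : ℕ) (π : Equiv.Perm (Fin (m+1))) (j : Fin (m+1)) :
    (((finRotate (m+1)) ^ k)⁻¹ * π * (finRotate (m+1)) ^ k) j
      = π (j + (k : Fin (m+1))) - (k : Fin (m+1)) := by
  rw [Equiv.Perm.mul_apply, Equiv.Perm.mul_apply, finRotate_pow_apply]
  rw [Equiv.Perm.inv_def, Equiv.symm_apply_eq, finRotate_pow_apply, sub_add_cancel]

lemma cdes_succ (m : ℕ) (σ : Equiv.Perm (Fin (m+1))) :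
    cdes σ = des σ + (if σ ⟨0, Nat.succ_pos m⟩ < σ ⟨m, Nat.lt_succ_self m⟩ then 1 else 0) := by
  unfold cdes des
  rw [Finset.card_filter, Finset.card_filter, Fin.sum_univ_castSucc]
  congr 1
  · apply Finset.sum_congr rfl
    intro i _
    congr 1
    · ext
      constructor <;> intro h <;> convert h using 3 <;>
        simp [Fin.castSucc, Fin.ext_iff, Nat.mod_eq_of_lt (by omega : (i.1+1) < m+1)]
  · have h0 : (((Fin.last m).1 + 1) % (m+1)) = 0 := by simp [Fin.last]
    congr 1
    · ext
      constructor <;> intro h <;> convert h using 3 <;> simp [Fin.ext_iff, h0, Fin.last]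

theorem cdes_eq_des_add_one_of_gt {n : ℕ} (π : Equiv.Perm (Fin n)) (i : ℕ) (hi : i + 1 < n) :
    let p : Fin n := ⟨i, by omega⟩
    let q : Fin n := ⟨i + 1, hi⟩
    let k : ℕ := min ((π⁻¹ p : Fin n) : ℕ) ((π⁻¹ q : Fin n) : ℕ) + 1
    let w := finRotate n
    (({p, q} ∩ {π p, π q} : Finset (Fin n)) = ∅) →
    ((((π⁻¹ p : Fin n) : ℕ) : ℤ) - (((π⁻¹ q : Fin n) : ℕ) : ℤ)).natAbs = 1 →
    π⁻¹ q < π⁻¹ p →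
    cdes ((w ^ k)⁻¹ * π * w ^ k) = des ((w ^ k)⁻¹ * π * w ^ k) + 1 := by
  intro p q k w hint hnat hgt
  obtain ⟨m, rfl⟩ : ∃ m, n = m + 1 := ⟨n - 1, by omega⟩
  set a : Fin (m+1) := π⁻¹ q with ha
  set b : Fin (m+1) := π⁻¹ p with hb
  have hab : (b : ℕ) = (a : ℕ) + 1 := by
    have h1 : (a : ℕ) < (b : ℕ) := hgt
    have h2 := Int.natAbs_eq_iff.mp hnat
    omega
  have hk : k = (a : ℕ) + 1 := by
    simp only [k, ← ha, ← hb]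
    omega
  -- cast of k into Fin (m+1) equals b
  have hkb : ((k : ℕ) : Fin (m+1)) = b := by
    rw [hk]
    have : ((((a : ℕ) + 1 : ℕ)) : Fin (m+1)) = ((b : ℕ) : Fin (m+1)) := by rw [hab]
    rw [this, Fin.cast_val_eq_self]
  have hba : b = a + 1 := by
    apply Fin.ext
    rw [Fin.val_add_one_of_lt]
    · exact hab
    · rw [Fin.lt_iff_val_lt_val, Fin.val_last]
      have := b.2; omega
  have hpia : π a = q := by rw [ha]; simp
  have hpib : π b = p := by rw [hb]; simp
  -- π p ≠ q, hence p ≠ a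
  have hpa : p ≠ a := by
    intro h
    have : q ∈ ({p, q} ∩ {π p, π q} : Finset (Fin (m+1))) := by
      rw [Finset.mem_inter]
      constructor
      · simp
      · rw [h, hpia]; simp
    rw [hint] at this
    exact absurd this (Finset.notMem_empty q)
  set σ := (w ^ k)⁻¹ * π * w ^ k with hσ
  have hconj : ∀ j, σ j = π (j + b) - b := by
    intro j; rw [hσ, conj_apply, hkb]
  have hplt : p < Fin.last m := by
    rw [Fin.lt_iff_val_lt_val, Fin.val_last]
    show i < m; omega
  have hq : q = p + 1 := by
    apply Fin.ext
    rw [Fin.val_add_one_of_lt hplt]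
  have hσ0 : σ ⟨0, Nat.succ_pos m⟩ = p - b := by
    rw [hconj]
    have : (⟨0, Nat.succ_pos m⟩ : Fin (m+1)) + b = b := by
      rw [Fin.ext_iff]; simp
    rw [this, hpib]
  have hσm : σ ⟨m, Nat.lt_succ_self m⟩ = (p - b) + 1 := by
    rw [hconj]
    have hlast : (⟨m, Nat.lt_succ_self m⟩ : Fin (m+1)) + b = a := by
      rw [hba]
      have : (⟨m, Nat.lt_succ_self m⟩ : Fin (m+1)) + 1 = 0 := by
        rw [Fin.ext_iff]; simp [Fin.add_def]
      rw [add_comm a 1, ← add_assoc, this, zero_add]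
    rw [hlast, hpia, hq]
    ring
  have hlt : σ ⟨0, Nat.succ_pos m⟩ < σ ⟨m, Nat.lt_succ_self m⟩ := by
    rw [hσ0, hσm]
    set x := p - b with hx
    have hxne : (x : ℕ) ≠ m := by
      intro h
      apply hpa
      have hxl : x = Fin.last m := by
        apply Fin.ext; rw [h]; rfl
      have hx1 : x + 1 = 0 := by
        rw [Fin.ext_iff, Fin.val_add_one, if_pos hxl]
        simp
      have : p - b + 1 = 0 := hx1
      have : p = b - 1 := by
        rw [eq_sub_iff_add_eq]
        linear_combination (norm := abel) this - (neg_add_cancel (1 : Fin (m+1)))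
      rw [this, hba]
      abel
    rw [Fin.lt_iff_val_lt_val, Fin.val_add_one_of_lt]
    · omega
    · rw [Fin.lt_iff_val_lt_val, Fin.val_last]
      have := x.2; omega
  rw [cdes_succ, if_pos hlt]
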